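/- arXiv:2106.00871 — 2 statements merged into one kernel-verified Lean document; each statement's English description precedes it below -/
import Mathlib

section
/- Let $f : \mathbf{R} \to \mathbf{R}$ be three-times differentiable with $f$, $f'$, $f''$, $f'''$ bounded; let $M$ be a bound with $|f''(t)| \le M$ for all $t$, let $\epsilon > 0$, and let $\delta > 0$ satisfy $\delta\,|f'''(t)| \le \epsilon$ for all $t \in \mathbf{R}$. Let $S$ and $X$ be independent real-valued random variables with $\mathbb{E}[X] = 0$ and $\mathbb{E}[X^2] < \infty$. Then $\bigl|\mathbb{E}[f(S+X)] - \mathbb{E}[f(S)] - \tfrac{1}{2}\mathbb{E}[f''(S)]\,\mathbb{E}[X^2]\bigr| \le \tfrac{\epsilon}{2}\,\mathbb{E}[X^2] + M\,\mathbb{E}[X^2 \, \mathbf{1}_{\{|X| > \delta\}}]$. -/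
/-!
Write `f (S + X) = f S + f' S X + f'' S X² / 2 + R`. By independence the linear term has mean
`E[f' S] E[X] = 0` and the quadratic term has mean `E[f'' S] E[X²] / 2`, so only `E[R]` remains.
Where `|X| ≤ δ` the cubic Taylor bound gives `|R| ≤ sup |f'''| |X|³ / 6 ≤ ε X² / 6`; where
`|X| > δ` the quadratic Taylor bound and `|f''| ≤ M` give `|R| ≤ M X²`.
-/

open MeasureTheory ProbabilityTheory Set

lemma abs_le_of_hasDerivAt_of_abs_le_mul_pow {g g' : ℝ → ℝ} {C : ℝ} {n : ℕ}
    (hg : ∀ t, HasDerivAt g (g' t) t) (hg0 : g 0 = 0) (hg' : ∀ t, |g' t| ≤ C * |t| ^ n)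
    (x : ℝ) : |g x| ≤ C * |x| ^ (n + 1) / (n + 1) := by
  have hbound : Continuous fun t : ℝ => C * |t| ^ n := by fun_prop
  have hg'_meas : Measurable g' := by
    rw [show g' = deriv g from funext fun t => (hg t).deriv.symm]
    exact measurable_deriv g
  have hg'_int : IntervalIntegrable g' volume 0 x :=
    (hbound.intervalIntegrable 0 x).mono_fun hg'_meas.aestronglyMeasurable
      (ae_of_all _ fun t => (hg' t).trans (le_abs_self _))
  have hftc : ∫ t in (0 : ℝ)..x, g' t = g x := by
    rw [intervalIntegral.integral_eq_sub_of_hasDerivAt (fun t _ => hg t) hg'_int, hg0, sub_zero]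
  calc |g x| = |∫ t in uIoc 0 x, g' t| := by rw [← hftc, intervalIntegral.abs_intervalIntegral_eq]
    _ ≤ ∫ t in uIoc 0 x, C * |t| ^ n := by
      simpa only [Real.norm_eq_abs] using
        norm_integral_le_of_norm_le hbound.integrableOn_uIoc (f := g') (ae_of_all _ hg')
    _ = C * |x| ^ (n + 1) / (n + 1) := by
      have := integral_pow_abs_sub_uIoc (a := 0) (b := x) n
      simp only [sub_zero] at this
      rw [integral_const_mul, this, mul_div_assoc]

lemma abs_taylor_remainder_first_order_le {f : ℝ → ℝ} {M : ℝ} (hf : Differentiable ℝ f)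
    (hf' : Differentiable ℝ (deriv f)) (hM : ∀ t, |deriv (deriv f) t| ≤ M) (a x : ℝ) :
    |f (a + x) - f a - deriv f a * x| ≤ M / 2 * x ^ 2 := by
  have hderiv : ∀ t, HasDerivAt (fun t => f (a + t) - f a - deriv f a * t)
      (deriv f (a + t) - deriv f a) t := fun t =>
    (((hf (a + t)).hasDerivAt.comp_const_add a t).sub_const _).sub
      (by simpa using (hasDerivAt_id t).const_mul (deriv f a))
  have hlip : ∀ t, |deriv f (a + t) - deriv f a| ≤ M * |t| ^ 1 := fun t => by
    simpa using convex_univ.norm_image_sub_le_of_norm_deriv_le (fun y _ => hf' y)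
      (fun y _ => hM y) (mem_univ a) (mem_univ (a + t))
  refine (abs_le_of_hasDerivAt_of_abs_le_mul_pow hderiv (by simp) hlip x).trans_eq ?_
  rw [sq_abs]
  ring

lemma abs_taylor_remainder_second_order_le {f : ℝ → ℝ} {K : ℝ} (hf : Differentiable ℝ f)
    (hf' : Differentiable ℝ (deriv f)) (hf'' : Differentiable ℝ (deriv (deriv f)))
    (hK : ∀ t, |deriv (deriv (deriv f)) t| ≤ K) (a x : ℝ) :
    |f (a + x) - f a - deriv f a * x - deriv (deriv f) a * x ^ 2 / 2| ≤ K / 6 * |x| ^ 3 := by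
  have hderiv : ∀ t, HasDerivAt
      (fun t => f (a + t) - f a - deriv f a * t - deriv (deriv f) a * t ^ 2 / 2)
      (deriv f (a + t) - deriv f a - deriv (deriv f) a * t) t := fun t => by
    have hquad : HasDerivAt (fun t => deriv (deriv f) a * t ^ 2 / 2) (deriv (deriv f) a * t) t := by
      refine (((hasDerivAt_pow 2 t).const_mul (deriv (deriv f) a)).div_const 2).congr_deriv ?_
      push_cast
      ring
    exact ((((hf (a + t)).hasDerivAt.comp_const_add a t).sub_const _).sub
      (by simpa using (hasDerivAt_id t).const_mul (deriv f a))).sub hquad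
  have hbound : ∀ t, |deriv f (a + t) - deriv f a - deriv (deriv f) a * t| ≤ K / 2 * |t| ^ 2 :=
    fun t => by simpa using abs_taylor_remainder_first_order_le hf' hf'' hK a t
  refine (abs_le_of_hasDerivAt_of_abs_le_mul_pow hderiv (by simp) hbound x).trans_eq ?_
  norm_num
  ring

lemma abs_taylor_remainder_second_order_le_add_indicator {f : ℝ → ℝ} {M ε δ : ℝ}
    (hf : Differentiable ℝ f) (hf' : Differentiable ℝ (deriv f))
    (hf'' : Differentiable ℝ (deriv (deriv f))) (hM : ∀ t, |deriv (deriv f) t| ≤ M)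
    (hδ : 0 < δ) (hδf : ∀ t, δ * |deriv (deriv (deriv f)) t| ≤ ε) (a x : ℝ) :
    |f (a + x) - f a - deriv f a * x - deriv (deriv f) a * x ^ 2 / 2|
      ≤ ε / 2 * x ^ 2 + M * {y : ℝ | δ < |y|}.indicator (· ^ 2) x := by
  have hε : 0 ≤ ε := (mul_nonneg hδ.le (abs_nonneg _)).trans (hδf 0)
  by_cases hx : δ < |x|
  · rw [indicator_of_mem (show x ∈ {y : ℝ | δ < |y|} from hx)]
    have hquad : |deriv (deriv f) a * x ^ 2 / 2| ≤ M / 2 * x ^ 2 := by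
      rw [abs_div, abs_mul, abs_two, abs_sq]
      have := mul_le_mul_of_nonneg_right (hM a) (sq_nonneg x)
      linarith
    calc _ ≤ |f (a + x) - f a - deriv f a * x| + |deriv (deriv f) a * x ^ 2 / 2| := abs_sub _ _
      _ ≤ M / 2 * x ^ 2 + M / 2 * x ^ 2 :=
        add_le_add (abs_taylor_remainder_first_order_le hf hf' hM a x) hquad
      _ ≤ ε / 2 * x ^ 2 + M * x ^ 2 := by nlinarith [sq_nonneg x]
  · rw [indicator_of_notMem (show x ∉ {y : ℝ | δ < |y|} from hx), mul_zero, add_zero]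
    have hK : ∀ t, |deriv (deriv (deriv f)) t| ≤ ε / δ := fun t =>
      (le_div_iff₀ hδ).2 (by linarith [hδf t])
    have hcube : |x| ^ 3 ≤ δ * x ^ 2 := by
      rw [pow_succ, ← sq_abs x, mul_comm]
      exact mul_le_mul_of_nonneg_right (not_lt.1 hx) (sq_nonneg _)
    calc _ ≤ ε / δ / 6 * |x| ^ 3 := abs_taylor_remainder_second_order_le hf hf' hf'' hK a x
      _ ≤ ε / δ / 6 * (δ * x ^ 2) := by gcongr
      _ = ε / 6 * x ^ 2 := by field_simp
      _ ≤ ε / 2 * x ^ 2 := by gcongr; norm_num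

section Integrals

variable {Ω : Type*} [MeasurableSpace Ω] {μ : Measure Ω} [IsFiniteMeasure μ]

lemma integrable_comp_of_abs_le {g : ℝ → ℝ} {Y : Ω → ℝ} (hg : Measurable g)
    (hgb : ∃ C, ∀ t, |g t| ≤ C) (hY : Measurable Y) : Integrable (fun ω => g (Y ω)) μ := by
  obtain ⟨C, hC⟩ := hgb
  exact .of_bound (hg.comp hY).aestronglyMeasurable C (ae_of_all _ fun ω => hC (Y ω))

lemma integral_taylor_remainder_eq_of_indepFun {f f₁ f₂ : ℝ → ℝ} (hf : Measurable f)
    (hf₁ : Measurable f₁) (hf₂ : Measurable f₂) (hfb : ∃ C, ∀ t, |f t| ≤ C)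
    (hf₁b : ∃ C, ∀ t, |f₁ t| ≤ C) (hf₂b : ∃ C, ∀ t, |f₂ t| ≤ C) {S X : Ω → ℝ}
    (hS : Measurable S) (hX : Measurable X) (hindep : IndepFun S X μ) (hXmean : ∫ ω, X ω ∂μ = 0)
    (hX2 : MemLp X 2 μ) :
    ∫ ω, (f (S ω + X ω) - f (S ω) - f₁ (S ω) * X ω - f₂ (S ω) * X ω ^ 2 / 2) ∂μ
      = ∫ ω, f (S ω + X ω) ∂μ - ∫ ω, f (S ω) ∂μ
        - (∫ ω, f₂ (S ω) ∂μ) * (∫ ω, X ω ^ 2 ∂μ) / 2 := by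
  obtain ⟨C₁, hC₁⟩ := hf₁b
  obtain ⟨C₂, hC₂⟩ := hf₂b
  have hXint : Integrable X μ := hX2.integrable one_le_two
  have hX2int : Integrable (fun ω => X ω ^ 2) μ := hX2.integrable_sq
  have hfSX : Integrable (fun ω => f (S ω + X ω)) μ := integrable_comp_of_abs_le hf hfb (hS.add hX)
  have hfS : Integrable (fun ω => f (S ω)) μ := integrable_comp_of_abs_le hf hfb hS
  have hlin : Integrable (fun ω => f₁ (S ω) * X ω) μ :=
    hXint.bdd_mul (hf₁.comp hS).aestronglyMeasurable (ae_of_all _ fun ω => hC₁ (S ω))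
  have hquad : Integrable (fun ω => f₂ (S ω) * X ω ^ 2 / 2) μ :=
    (hX2int.bdd_mul (hf₂.comp hS).aestronglyMeasurable (ae_of_all _ fun ω => hC₂ (S ω))).div_const 2
  have hlin_eq : ∫ ω, f₁ (S ω) * X ω ∂μ = (∫ ω, f₁ (S ω) ∂μ) * ∫ ω, X ω ∂μ :=
    (hindep.comp hf₁ measurable_id).integral_fun_mul_eq_mul_integral
      (hf₁.comp hS).aestronglyMeasurable hXint.aestronglyMeasurable
  have hquad_eq : ∫ ω, f₂ (S ω) * X ω ^ 2 ∂μ = (∫ ω, f₂ (S ω) ∂μ) * ∫ ω, X ω ^ 2 ∂μ :=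
    (hindep.comp hf₂ (measurable_id.pow_const 2)).integral_fun_mul_eq_mul_integral
      (hf₂.comp hS).aestronglyMeasurable hX2int.aestronglyMeasurable
  have hdiff : Integrable (fun ω => f (S ω + X ω) - f (S ω)) μ := hfSX.sub hfS
  have hlinrem : Integrable (fun ω => f (S ω + X ω) - f (S ω) - f₁ (S ω) * X ω) μ :=
    hdiff.sub hlin
  rw [integral_sub hlinrem hquad, integral_sub hdiff hlin,
    integral_sub hfSX hfS, integral_div, hlin_eq, hquad_eq, hXmean, mul_zero, sub_zero]

end Integrals

theorem single_swap_estimate_general {Ω : Type*} [MeasureSpace Ω]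
    [IsProbabilityMeasure (ℙ : Measure Ω)]
    (f : ℝ → ℝ)
    (hf1 : Differentiable ℝ f) (hf2 : Differentiable ℝ (deriv f))
    (hf3 : Differentiable ℝ (deriv (deriv f)))
    (hfb : ∃ C, ∀ t, |f t| ≤ C) (hf1b : ∃ C, ∀ t, |deriv f t| ≤ C)
    (M ε δ : ℝ) (hM : ∀ t, |deriv (deriv f) t| ≤ M)
    (hδ : 0 < δ)
    (hδf : ∀ t, δ * |deriv (deriv (deriv f)) t| ≤ ε)
    (S X : Ω → ℝ) (hS : Measurable S) (hX : Measurable X)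
    (hindep : IndepFun S X ℙ)
    (hXmean : ∫ ω, X ω ∂ℙ = 0) (hX2 : MemLp X 2 ℙ) :
    |∫ ω, f (S ω + X ω) ∂ℙ - ∫ ω, f (S ω) ∂ℙ
        - (∫ ω, deriv (deriv f) (S ω) ∂ℙ) * (∫ ω, (X ω) ^ 2 ∂ℙ) / 2|
      ≤ ε / 2 * ∫ ω, (X ω) ^ 2 ∂ℙ
        + M * ∫ ω in {ω | δ < |X ω|}, (X ω) ^ 2 ∂ℙ := by
  have hX2int : Integrable (fun ω => X ω ^ 2) ℙ := hX2.integrable_sq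
  have hA : MeasurableSet {ω | δ < |X ω|} := measurableSet_lt measurable_const hX.abs
  have hsmall := hX2int.const_mul (ε / 2)
  have hlarge := (hX2int.indicator hA).const_mul M
  rw [← integral_taylor_remainder_eq_of_indepFun hf1.continuous.measurable (measurable_deriv f)
    (measurable_deriv _) hfb hf1b ⟨M, hM⟩ hS hX hindep hXmean hX2, ← Real.norm_eq_abs]
  calc _ ≤ ∫ ω, (ε / 2 * X ω ^ 2 + M * {ω | δ < |X ω|}.indicator (fun ω => X ω ^ 2) ω) ∂ℙ :=
        norm_integral_le_of_norm_le (hsmall.add hlarge) (ae_of_all _ fun ω =>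
          abs_taylor_remainder_second_order_le_add_indicator hf1 hf2 hf3 hM hδ hδf (S ω) (X ω))
    _ = _ := by
      rw [integral_add hsmall hlarge,
        integral_const_mul, integral_const_mul, integral_indicator hA]

/-- The single-swap Taylor estimate: if `f` is three-times differentiable with `f, f', f'',
f'''` bounded, `M` bounds `|f''|`, `δ > 0` satisfies `δ * |f'''| ≤ ε` everywhere, and `S, X`
are independent random variables with `E[X] = 0` and `E[X^2] < ∞`, then
`|E[f (S + X)] - E[f S] - E[f'' S] * E[X^2] / 2| ≤ ε/2 * E[X^2] + M * E[X^2; |X| > δ]`. -/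
theorem single_swap_estimate {Ω : Type*} [MeasureSpace Ω]
    [IsProbabilityMeasure (ℙ : Measure Ω)]
    (f : ℝ → ℝ)
    (hf1 : Differentiable ℝ f) (hf2 : Differentiable ℝ (deriv f))
    (hf3 : Differentiable ℝ (deriv (deriv f)))
    (hfb : ∃ C, ∀ t, |f t| ≤ C) (hf1b : ∃ C, ∀ t, |deriv f t| ≤ C)
    (hf3b : ∃ C, ∀ t, |deriv (deriv (deriv f)) t| ≤ C)
    (M ε δ : ℝ) (hM : ∀ t, |deriv (deriv f) t| ≤ M)
    (hε : 0 < ε) (hδ : 0 < δ)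
    (hδf : ∀ t, δ * |deriv (deriv (deriv f)) t| ≤ ε)
    (S X : Ω → ℝ) (hS : Measurable S) (hX : Measurable X)
    (hindep : IndepFun S X ℙ)
    (hXmean : ∫ ω, X ω ∂ℙ = 0) (hX2 : MemLp X 2 ℙ) :
    |∫ ω, f (S ω + X ω) ∂ℙ - ∫ ω, f (S ω) ∂ℙ
        - (∫ ω, deriv (deriv f) (S ω) ∂ℙ) * (∫ ω, (X ω) ^ 2 ∂ℙ) / 2|
      ≤ ε / 2 * ∫ ω, (X ω) ^ 2 ∂ℙ
        + M * ∫ ω in {ω | δ < |X ω|}, (X ω) ^ 2 ∂ℙ :=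
  single_swap_estimate_general f hf1 hf2 hf3 hfb hf1b M ε δ hM hδ hδf S X hS hX hindep hXmean hX2
end

section
/- Let $f : \mathbf{R} \to \mathbf{R}$ be three-times differentiable with $f$, $f'$, $f''$, $f'''$ bounded; let $M$ bound $|f''|$, let $\epsilon > 0$, and let $\delta > 0$ satisfy $\delta\,|f'''(t)| \le \epsilon$ for all $t$. Let $S$, $X$, and $Y$ be real-valued random variables such that $S$ is independent of $X$, $S$ is independent of $Y$, $\mathbb{E}[X] = \mathbb{E}[Y] = 0$, and $\mathbb{E}[X^2] = \mathbb{E}[Y^2] < \infty$. Then $\bigl|\mathbb{E}[f(S+X)] - \mathbb{E}[f(S+Y)]\bigr| \le \epsilon\,\mathbb{E}[X^2] + M\,\mathbb{E}[X^2 \, \mathbf{1}_{\{|X| > \delta\}}] + M\,\mathbb{E}[Y^2 \, \mathbf{1}_{\{|Y| > \delta\}}]$. -/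
/-!
Taylor's formula at `s` with remainder `R(s, x) = f (s + x) - f s - f' s * x - f'' s * x ^ 2 / 2`
gives `f (s + X) = f s + f' s * X + f'' s * X ^ 2 / 2 + R(s, X)`. Taking expectations with `S`
independent of `X`, the linear term vanishes and the quadratic term is `E[f'' S] * E[X ^ 2] / 2`,
which is the same for `X` and `Y`. So the difference of the two expectations is controlled by the
remainders, and `|R(s, x)|` is at most `‖f'''‖∞ |x| ^ 3 / 6 ≤ ε x ^ 2 / 6` when `|x| ≤ δ` and at
most `M x ^ 2` always. Both bounds come from integrating a derivative bound outward from `0`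
twice, since `∂ₓ R(s, x)` is the first-order Taylor remainder of `f'` at `s`.
-/

open MeasureTheory ProbabilityTheory

section FencingBound

variable {E : Type*} [NormedAddCommGroup E] [NormedSpace ℝ E] {g g' : ℝ → E} {C : ℝ} {n : ℕ}

lemma norm_le_of_norm_hasDerivAt_le_mul_pow_of_nonneg (hg : ∀ t, HasDerivAt g (g' t) t)
    (h0 : g 0 = 0) (hb : ∀ t, ‖g' t‖ ≤ C * |t| ^ n) {x : ℝ} (hx : 0 ≤ x) :
    ‖g x‖ ≤ C / (n + 1) * x ^ (n + 1) := by
  have hB (t : ℝ) : HasDerivAt (fun t => C / (n + 1) * t ^ (n + 1)) (C * t ^ n) t := by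
    refine ((hasDerivAt_pow (n + 1) t).const_mul (C / (n + 1))).congr_deriv ?_
    rw [Nat.add_sub_cancel]
    push_cast
    field_simp
  exact image_norm_le_of_norm_deriv_right_le_deriv_boundary
    (fun t _ => (hg t).continuousAt.continuousWithinAt) (fun t _ => (hg t).hasDerivWithinAt)
    (by simp [h0]) hB (fun t ht => by simpa [abs_of_nonneg ht.1] using hb t) ⟨hx, le_rfl⟩

lemma norm_le_of_norm_hasDerivAt_le_mul_abs_pow (hg : ∀ t, HasDerivAt g (g' t) t)
    (h0 : g 0 = 0) (hb : ∀ t, ‖g' t‖ ≤ C * |t| ^ n) (x : ℝ) :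
    ‖g x‖ ≤ C / (n + 1) * |x| ^ (n + 1) := by
  rcases le_total 0 x with hx | hx
  · rw [abs_of_nonneg hx]
    exact norm_le_of_norm_hasDerivAt_le_mul_pow_of_nonneg hg h0 hb hx
  · have hg_neg (t : ℝ) : HasDerivAt (fun t => g (-t)) ((-1 : ℝ) • g' (-t)) t :=
      (hg (-t)).scomp t (hasDerivAt_neg t)
    have := norm_le_of_norm_hasDerivAt_le_mul_pow_of_nonneg hg_neg (by simpa using h0)
      (fun t => by simpa using hb (-t)) (neg_nonneg.mpr hx)
    rwa [neg_neg, ← abs_of_nonpos hx] at this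

end FencingBound

section TaylorRemainder

noncomputable def taylorRem₁ (f f' : ℝ → ℝ) (s x : ℝ) : ℝ := f (s + x) - f s - f' s * x

noncomputable def taylorRem₂ (f f' f'' : ℝ → ℝ) (s x : ℝ) : ℝ :=
  taylorRem₁ f f' s x - f'' s * x ^ 2 / 2

variable {f f' f'' f''' : ℝ → ℝ} (s : ℝ)

lemma hasDerivAt_taylorRem₁ (hf : ∀ t, HasDerivAt f (f' t) t) (x : ℝ) :
    HasDerivAt (taylorRem₁ f f' s) (f' (s + x) - f' s) x :=
  ((((hf (s + x)).comp_const_add s x).sub_const (f s)).sub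
    ((hasDerivAt_id' x).const_mul (f' s))).congr_deriv (by ring)

lemma hasDerivAt_taylorRem₂ (hf : ∀ t, HasDerivAt f (f' t) t) (x : ℝ) :
    HasDerivAt (taylorRem₂ f f' f'' s) (taylorRem₁ f' f'' s x) x :=
  ((hasDerivAt_taylorRem₁ s hf x).sub
    (((hasDerivAt_pow 2 x).const_mul (f'' s)).div_const 2)).congr_deriv (by
      simp only [taylorRem₁]; push_cast; ring)

lemma abs_taylorRem₁_le_mul_abs {M : ℝ} (hf : ∀ t, HasDerivAt f (f' t) t)
    (hM : ∀ t, |f' t| ≤ M) (x : ℝ) : |taylorRem₁ f f' s x| ≤ 2 * M * |x| := by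
  have hincr (t : ℝ) : |f' (s + t) - f' s| ≤ M + M :=
    (abs_sub _ _).trans (add_le_add (hM _) (hM s))
  have := norm_le_of_norm_hasDerivAt_le_mul_abs_pow (n := 0) (hasDerivAt_taylorRem₁ s hf)
    (by simp [taylorRem₁]) (fun t => by simpa using hincr t) x
  simpa [two_mul] using this

lemma abs_taylorRem₁_le_mul_sq {L : ℝ} (hf : ∀ t, HasDerivAt f (f' t) t)
    (hf' : ∀ t, HasDerivAt f' (f'' t) t) (hL : ∀ t, |f'' t| ≤ L) (x : ℝ) :
    |taylorRem₁ f f' s x| ≤ L / 2 * x ^ 2 := by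
  have hincr (t : ℝ) : |f' (s + t) - f' s| ≤ L * |t| := by
    simpa using norm_le_of_norm_hasDerivAt_le_mul_abs_pow (n := 0)
      (fun t => ((hf' (s + t)).comp_const_add s t).sub_const (f' s)) (by simp)
      (fun t => by simpa using hL (s + t)) t
  have := norm_le_of_norm_hasDerivAt_le_mul_abs_pow (n := 1) (hasDerivAt_taylorRem₁ s hf)
    (by simp [taylorRem₁]) (fun t => by simpa using hincr t) x
  norm_num at this
  exact this

lemma abs_taylorRem₂_le_mul_sq {M : ℝ} (hf : ∀ t, HasDerivAt f (f' t) t)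
    (hf' : ∀ t, HasDerivAt f' (f'' t) t) (hM : ∀ t, |f'' t| ≤ M) (x : ℝ) :
    |taylorRem₂ f f' f'' s x| ≤ M * x ^ 2 := by
  have := norm_le_of_norm_hasDerivAt_le_mul_abs_pow (n := 1) (hasDerivAt_taylorRem₂ s hf)
    (by simp [taylorRem₂, taylorRem₁])
    (fun t => by simpa using abs_taylorRem₁_le_mul_abs s hf' hM t) x
  norm_num at this
  linarith

lemma abs_taylorRem₂_le_mul_abs_pow_three {L : ℝ} (hf : ∀ t, HasDerivAt f (f' t) t)
    (hf' : ∀ t, HasDerivAt f' (f'' t) t) (hf'' : ∀ t, HasDerivAt f'' (f''' t) t)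
    (hL : ∀ t, |f''' t| ≤ L) (x : ℝ) :
    |taylorRem₂ f f' f'' s x| ≤ L / 6 * |x| ^ 3 := by
  have := norm_le_of_norm_hasDerivAt_le_mul_abs_pow (n := 2) (hasDerivAt_taylorRem₂ s hf)
    (by simp [taylorRem₂, taylorRem₁])
    (fun t => by simpa using abs_taylorRem₁_le_mul_sq s hf' hf'' hL t) x
  norm_num at this
  linarith

lemma abs_taylorRem₂_le_add_indicator {M ε δ : ℝ} (hf : ∀ t, HasDerivAt f (f' t) t)
    (hf' : ∀ t, HasDerivAt f' (f'' t) t) (hf'' : ∀ t, HasDerivAt f'' (f''' t) t)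
    (hM : ∀ t, |f'' t| ≤ M) (hδ : 0 < δ) (hδf : ∀ t, δ * |f''' t| ≤ ε) (x : ℝ) :
    |taylorRem₂ f f' f'' s x| ≤ ε / 6 * x ^ 2 + M * {x : ℝ | δ < |x|}.indicator (· ^ 2) x := by
  have hε : 0 ≤ ε := (mul_nonneg hδ.le (abs_nonneg _)).trans (hδf 0)
  by_cases hx : δ < |x|
  · rw [Set.indicator_of_mem (show x ∈ {x : ℝ | δ < |x|} from hx)]
    nlinarith [abs_taylorRem₂_le_mul_sq s hf hf' hM x, sq_nonneg x]
  · rw [Set.indicator_of_notMem (show x ∉ {x : ℝ | δ < |x|} from hx), mul_zero, add_zero]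
    have hL (t : ℝ) : |f''' t| ≤ ε / δ := by rw [le_div_iff₀ hδ, mul_comm]; exact hδf t
    calc |taylorRem₂ f f' f'' s x| ≤ ε / δ / 6 * |x| ^ 3 :=
          abs_taylorRem₂_le_mul_abs_pow_three s hf hf' hf'' hL x
      _ = ε / 6 * x ^ 2 * (|x| / δ) := by rw [pow_succ, sq_abs]; field_simp
      _ ≤ ε / 6 * x ^ 2 * 1 := by gcongr; exact (div_le_one hδ).2 (not_lt.1 hx)
      _ = ε / 6 * x ^ 2 := mul_one _

end TaylorRemainder

section Expectation

variable {Ω : Type*} [MeasurableSpace Ω] {μ : Measure Ω} [IsFiniteMeasure μ]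
  {f f' f'' f''' : ℝ → ℝ} {S X : Ω → ℝ}

lemma integral_taylorRem₂_of_indepFun (hf : Measurable f) (hfb : ∃ C, ∀ t, |f t| ≤ C)
    (hf' : Measurable f') (hf'b : ∃ C, ∀ t, |f' t| ≤ C)
    (hf'' : Measurable f'') (hf''b : ∃ C, ∀ t, |f'' t| ≤ C)
    (hS : Measurable S) (hX : Measurable X) (hSX : IndepFun S X μ)
    (hXmean : ∫ ω, X ω ∂μ = 0) (hX2 : MemLp X 2 μ) :
    ∫ ω, taylorRem₂ f f' f'' (S ω) (X ω) ∂μ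
      = ∫ ω, f (S ω + X ω) ∂μ - ∫ ω, f (S ω) ∂μ
        - (∫ ω, f'' (S ω) ∂μ) * (∫ ω, X ω ^ 2 ∂μ) / 2 := by
  obtain ⟨C, hC⟩ := hfb
  obtain ⟨C', hC'⟩ := hf'b
  obtain ⟨C'', hC''⟩ := hf''b
  have hXsq : Integrable (fun ω => X ω ^ 2) μ := hX2.integrable_sq
  have hlin : ∫ ω, f' (S ω) * X ω ∂μ = 0 := by
    rw [hSX.integral_fun_comp_mul_comp (g := fun x => x) hS.aemeasurable hX.aemeasurable
      hf'.aestronglyMeasurable measurable_id.aestronglyMeasurable]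
    simp [hXmean]
  have hquad : ∫ ω, f'' (S ω) * X ω ^ 2 ∂μ = (∫ ω, f'' (S ω) ∂μ) * ∫ ω, X ω ^ 2 ∂μ :=
    hSX.integral_fun_comp_mul_comp (g := (· ^ 2)) hS.aemeasurable hX.aemeasurable
      hf''.aestronglyMeasurable (measurable_id.pow_const 2).aestronglyMeasurable
  have hfSX : Integrable (fun ω => f (S ω + X ω)) μ :=
    .of_bound (hf.comp (hS.add hX)).aestronglyMeasurable C (ae_of_all _ fun _ => hC _)
  have hfS : Integrable (fun ω => f (S ω)) μ :=
    .of_bound (hf.comp hS).aestronglyMeasurable C (ae_of_all _ fun _ => hC _)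
  have hf'SX : Integrable (fun ω => f' (S ω) * X ω) μ :=
    (hX2.integrable one_le_two).bdd_mul (hf'.comp hS).aestronglyMeasurable
      (ae_of_all _ fun _ => hC' _)
  have hf''SX : Integrable (fun ω => f'' (S ω) * X ω ^ 2 / 2) μ :=
    (hXsq.bdd_mul (hf''.comp hS).aestronglyMeasurable (ae_of_all _ fun _ => hC'' _)).div_const 2
  simp only [taylorRem₂, taylorRem₁]
  rw [integral_sub, integral_sub, integral_sub hfSX hfS, integral_div, hlin, hquad, sub_zero]
  exacts [hfSX.sub hfS, hf'SX, (hfSX.sub hfS).sub hf'SX, hf''SX]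

lemma abs_integral_comp_add_sub_le {M ε δ : ℝ} (hf : ∀ t, HasDerivAt f (f' t) t)
    (hf' : ∀ t, HasDerivAt f' (f'' t) t) (hf'' : ∀ t, HasDerivAt f'' (f''' t) t)
    (hfb : ∃ C, ∀ t, |f t| ≤ C) (hf'b : ∃ C, ∀ t, |f' t| ≤ C) (hM : ∀ t, |f'' t| ≤ M)
    (hδ : 0 < δ) (hδf : ∀ t, δ * |f''' t| ≤ ε)
    (hS : Measurable S) (hX : Measurable X) (hSX : IndepFun S X μ)
    (hXmean : ∫ ω, X ω ∂μ = 0) (hX2 : MemLp X 2 μ) :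
    |∫ ω, f (S ω + X ω) ∂μ - ∫ ω, f (S ω) ∂μ - (∫ ω, f'' (S ω) ∂μ) * (∫ ω, X ω ^ 2 ∂μ) / 2|
      ≤ ε / 6 * ∫ ω, X ω ^ 2 ∂μ + M * ∫ ω in {ω | δ < |X ω|}, X ω ^ 2 ∂μ := by
  have measurable_of_hasDerivAt {g g' : ℝ → ℝ} (hg : ∀ t, HasDerivAt g (g' t) t) : Measurable g :=
    (continuous_iff_continuousAt.2 fun t => (hg t).continuousAt).measurable
  have hA : MeasurableSet {ω | δ < |X ω|} := measurableSet_lt measurable_const hX.abs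
  have hXsq : Integrable (fun ω => X ω ^ 2) μ := hX2.integrable_sq
  have hXsq_tail : Integrable (fun ω => M * {ω | δ < |X ω|}.indicator (fun ω => X ω ^ 2) ω) μ :=
    (hXsq.indicator hA).const_mul M
  rw [← integral_taylorRem₂_of_indepFun (measurable_of_hasDerivAt hf) hfb
    (measurable_of_hasDerivAt hf') hf'b (measurable_of_hasDerivAt hf'') ⟨M, hM⟩
    hS hX hSX hXmean hX2]
  calc |∫ ω, taylorRem₂ f f' f'' (S ω) (X ω) ∂μ|
      ≤ ∫ ω, (ε / 6 * X ω ^ 2 + M * {ω | δ < |X ω|}.indicator (fun ω => X ω ^ 2) ω) ∂μ := by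
        refine norm_integral_le_of_norm_le (f := fun ω => taylorRem₂ f f' f'' (S ω) (X ω)) ?_
          (ae_of_all _ fun ω => abs_taylorRem₂_le_add_indicator (S ω) hf hf' hf'' hM hδ hδf (X ω))
        exact (hXsq.const_mul _).add hXsq_tail
    _ = ε / 6 * ∫ ω, X ω ^ 2 ∂μ + M * ∫ ω in {ω | δ < |X ω|}, X ω ^ 2 ∂μ := by
        rw [integral_add (hXsq.const_mul _) hXsq_tail, integral_const_mul,
          integral_const_mul, integral_indicator hA]

end Expectation

theorem lindeberg_swap_estimate_general {Ω : Type*} [MeasureSpace Ω]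
    [IsProbabilityMeasure (ℙ : Measure Ω)]
    (f : ℝ → ℝ)
    (hf1 : Differentiable ℝ f) (hf2 : Differentiable ℝ (deriv f))
    (hf3 : Differentiable ℝ (deriv (deriv f)))
    (hfb : ∃ C, ∀ t, |f t| ≤ C) (hf1b : ∃ C, ∀ t, |deriv f t| ≤ C)
    (M ε δ : ℝ) (hM : ∀ t, |deriv (deriv f) t| ≤ M)
    (hδ : 0 < δ)
    (hδf : ∀ t, δ * |deriv (deriv (deriv f)) t| ≤ ε)
    (S X Y : Ω → ℝ) (hS : Measurable S) (hX : Measurable X) (hY : Measurable Y)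
    (hSX : IndepFun S X ℙ) (hSY : IndepFun S Y ℙ)
    (hXmean : ∫ ω, X ω ∂ℙ = 0) (hYmean : ∫ ω, Y ω ∂ℙ = 0)
    (hX2 : MemLp X 2 ℙ) (hY2 : MemLp Y 2 ℙ)
    (hvar : ∫ ω, (X ω) ^ 2 ∂ℙ = ∫ ω, (Y ω) ^ 2 ∂ℙ) :
    |∫ ω, f (S ω + X ω) ∂ℙ - ∫ ω, f (S ω + Y ω) ∂ℙ|
      ≤ ε * ∫ ω, (X ω) ^ 2 ∂ℙ
        + M * ∫ ω in {ω | δ < |X ω|}, (X ω) ^ 2 ∂ℙ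
        + M * ∫ ω in {ω | δ < |Y ω|}, (Y ω) ^ 2 ∂ℙ := by
  have hf : ∀ t, HasDerivAt f (deriv f t) t := fun t => (hf1 t).hasDerivAt
  have hf' : ∀ t, HasDerivAt (deriv f) (deriv (deriv f) t) t := fun t => (hf2 t).hasDerivAt
  have hf'' : ∀ t, HasDerivAt (deriv (deriv f)) (deriv (deriv (deriv f)) t) t :=
    fun t => (hf3 t).hasDerivAt
  have hXbound := abs_integral_comp_add_sub_le hf hf' hf'' hfb hf1b hM hδ hδf hS hX hSX hXmean hX2
  have hYbound := abs_integral_comp_add_sub_le hf hf' hf'' hfb hf1b hM hδ hδf hS hY hSY hYmean hY2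
  rw [← hvar] at hYbound
  have hε : 0 ≤ ε := (mul_nonneg hδ.le (abs_nonneg _)).trans (hδf 0)
  have hvar_nonneg : 0 ≤ ∫ ω, X ω ^ 2 ∂ℙ := integral_nonneg fun ω => sq_nonneg _
  obtain ⟨hX_lower, hX_upper⟩ := abs_le.mp hXbound
  obtain ⟨hY_lower, hY_upper⟩ := abs_le.mp hYbound
  rw [abs_le]
  constructor <;> linarith [mul_nonneg hε hvar_nonneg]

/-- **Lindeberg's swapping bound.**  If `f` is three-times differentiable with `f, f', f'',
f'''` bounded, `M` bounds `|f''|`, `δ > 0` satisfies `δ * |f'''| ≤ ε` everywhere, `S` is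
independent of `X` and of `Y`, `E[X] = E[Y] = 0` and `E[X^2] = E[Y^2] < ∞`, then
`|E[f (S + X)] - E[f (S + Y)]| ≤ ε * E[X^2] + M * E[X^2; |X| > δ] + M * E[Y^2; |Y| > δ]`. -/
theorem lindeberg_swap_estimate {Ω : Type*} [MeasureSpace Ω]
    [IsProbabilityMeasure (ℙ : Measure Ω)]
    (f : ℝ → ℝ)
    (hf1 : Differentiable ℝ f) (hf2 : Differentiable ℝ (deriv f))
    (hf3 : Differentiable ℝ (deriv (deriv f)))
    (hfb : ∃ C, ∀ t, |f t| ≤ C) (hf1b : ∃ C, ∀ t, |deriv f t| ≤ C)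
    (hf3b : ∃ C, ∀ t, |deriv (deriv (deriv f)) t| ≤ C)
    (M ε δ : ℝ) (hM : ∀ t, |deriv (deriv f) t| ≤ M)
    (hε : 0 < ε) (hδ : 0 < δ)
    (hδf : ∀ t, δ * |deriv (deriv (deriv f)) t| ≤ ε)
    (S X Y : Ω → ℝ) (hS : Measurable S) (hX : Measurable X) (hY : Measurable Y)
    (hSX : IndepFun S X ℙ) (hSY : IndepFun S Y ℙ)
    (hXmean : ∫ ω, X ω ∂ℙ = 0) (hYmean : ∫ ω, Y ω ∂ℙ = 0)
    (hX2 : MemLp X 2 ℙ) (hY2 : MemLp Y 2 ℙ)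
    (hvar : ∫ ω, (X ω) ^ 2 ∂ℙ = ∫ ω, (Y ω) ^ 2 ∂ℙ) :
    |∫ ω, f (S ω + X ω) ∂ℙ - ∫ ω, f (S ω + Y ω) ∂ℙ|
      ≤ ε * ∫ ω, (X ω) ^ 2 ∂ℙ
        + M * ∫ ω in {ω | δ < |X ω|}, (X ω) ^ 2 ∂ℙ
        + M * ∫ ω in {ω | δ < |Y ω|}, (Y ω) ^ 2 ∂ℙ :=
  lindeberg_swap_estimate_general f hf1 hf2 hf3 hfb hf1b M ε δ hM hδ hδf S X Y hS hX hY hSX hSY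
    hXmean hYmean hX2 hY2 hvar
end
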